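/- arXiv:2312.04250 — 8 statements merged into one kernel-verified Lean document; each statement's English description precedes it below -/
import Mathlib

section
/- For any ξ_1, ξ_2, …, ξ_{p+1} in the span E of the generators ϑ_1, …, ϑ_n, one has Σ_{σ ∈ Sym(p+1)} ξ_{σ(1)}·ξ_{σ(2)}⋯ξ_{σ(p+1)} = 0 in Ξ_n(p), where Sym(p+1) is the symmetric group on {1,…,p+1}. -/
/-!
Expanding `(∑ i ∈ T, ξ i) ^ m` over all maps `r : Fin m → Fin m` with image in `T` and summing with
signs `(-1) ^ (m - #T)`, inclusion–exclusion keeps exactly the surjective `r`, i.e. the permutations: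
`∑ σ, ξ (σ 0) ⋯ ξ (σ (m-1)) = ∑ T, (-1) ^ (m - #T) • (∑ i ∈ T, ξ i) ^ m`.
For `m = p + 1` every `∑ i ∈ T, ξ i` lies in `E`, and each `x ∈ E` satisfies
`2 x ^ (p + 1) = x ^ p * x + x * x ^ p = 0`, so every term vanishes.
-/

noncomputable section

open scoped BigOperators

/-- Commutator `[x, y] = x*y - y*x` in an associative ring. -/
def brk {A : Type*} [Ring A] (x y : A) : A := x * y - y * x

/-- The span of the generators of the free algebra on `ϑ_1, …, ϑ_n`. -/
def Espan (n : ℕ) : Submodule ℂ (FreeAlgebra ℂ (Fin n)) :=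
  Submodule.span ℂ (Set.range (FreeAlgebra.ι ℂ))

/-- Defining relations of the para-algebra `Ξ_n(p)`: for all `ξ, η, ζ` in the span of the
generators, `ξ^p·η + η·ξ^p = 0` and `[ξ, [η, ζ]] = 0`. -/
inductive XiRel (n p : ℕ) : FreeAlgebra ℂ (Fin n) → FreeAlgebra ℂ (Fin n) → Prop
  | anti : ∀ ξ η : FreeAlgebra ℂ (Fin n), ξ ∈ Espan n → η ∈ Espan n →
      XiRel n p (ξ ^ p * η + η * ξ ^ p) 0
  | central : ∀ ξ η ζ : FreeAlgebra ℂ (Fin n), ξ ∈ Espan n → η ∈ Espan n → ζ ∈ Espan n →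
      XiRel n p (ξ * (η * ζ - ζ * η) - (η * ζ - ζ * η) * ξ) 0

/-- The para-algebra `Ξ_n(p)` of order `p` and degree `n`. -/
abbrev Xi (n p : ℕ) : Type := RingQuot (XiRel n p)

/-- The generators `ϑ_i` of `Ξ_n(p)`. -/
def vth (n p : ℕ) (i : Fin n) : Xi n p :=
  RingQuot.mkAlgHom ℂ (XiRel n p) (FreeAlgebra.ι ℂ i)

/-- The span `E` of the generators `ϑ_1, …, ϑ_n` inside `Ξ_n(p)`. -/
def XiE (n p : ℕ) : Submodule ℂ (Xi n p) :=
  Submodule.span ℂ (Set.range (vth n p))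

open Finset

section Polarization

variable {α : Type*} [Fintype α] [DecidableEq α]

theorem Finset.sum_superset_neg_one_pow_card_compl (S : Finset α) :
    ∑ T with S ⊆ T, (-1 : ℤ) ^ #Tᶜ = if S = univ then 1 else 0 := by
  have hcompl : ∑ T with S ⊆ T, (-1 : ℤ) ^ #Tᶜ = ∑ U ∈ Sᶜ.powerset, (-1 : ℤ) ^ #U :=
    sum_nbij' compl compl (by simp) (by simp [subset_compl_comm]) (by simp) (by simp) (by simp)
  simp only [hcompl, sum_powerset_neg_one_pow_card, compl_eq_empty_iff]

theorem Finset.image_univ_eq_univ_iff {f : α → α} : univ.image f = univ ↔ f.Surjective := by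
  simp [eq_univ_iff_forall, Function.Surjective]

theorem Finset.sum_perm_eq_sum_filter_surjective {β : Type*} [AddCommMonoid β] (f : (α → α) → β) :
    ∑ σ : Equiv.Perm α, f σ = ∑ r : α → α with Function.Surjective r, f r := by
  refine sum_bij (fun σ _ => ⇑σ) (fun σ _ => mem_filter.mpr ⟨mem_univ _, σ.surjective⟩)
    (fun _ _ _ _ h => DFunLike.coe_injective h) (fun r hr => ?_) (fun _ _ => rfl)
  exact ⟨.ofBijective r (Finite.surjective_iff_bijective.mp (mem_filter.mp hr).2), mem_univ _, rfl⟩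

theorem MultilinearMap.sum_perm_apply_comp_eq {R M N : Type*} [CommSemiring R]
    [AddCommMonoid M] [AddCommGroup N] [Module R M] [Module R N]
    (F : MultilinearMap R (fun _ : α => M) N) (x : α → M) :
    ∑ σ : Equiv.Perm α, F (x ∘ σ) = ∑ T : Finset α, (-1 : ℤ) ^ #Tᶜ • F fun _ => ∑ i ∈ T, x i := by
  calc ∑ σ : Equiv.Perm α, F (x ∘ σ)
      = ∑ r : α → α, (if Function.Surjective r then 1 else 0 : ℤ) • F (x ∘ r) := by
        rw [sum_perm_eq_sum_filter_surjective (fun r => F (x ∘ r)), sum_filter]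
        exact sum_congr rfl fun r _ => by split_ifs <;> simp
    _ = ∑ r : α → α, ∑ T : Finset α,
          if univ.image r ⊆ T then (-1 : ℤ) ^ #Tᶜ • F (x ∘ r) else 0 := by
        refine sum_congr rfl fun r _ => ?_
        simp only [← sum_filter, ← sum_smul, sum_superset_neg_one_pow_card_compl,
          image_univ_eq_univ_iff]
    _ = ∑ T : Finset α, (-1 : ℤ) ^ #Tᶜ • F fun _ => ∑ i ∈ T, x i := by
        rw [sum_comm]
        refine sum_congr rfl fun T _ => ?_
        rw [F.map_sum_finset, smul_sum, ← sum_filter]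
        exact sum_congr (by ext r; simp [image_subset_iff]) fun _ _ => rfl

end Polarization

theorem sum_perm_prod_ofFn_eq {A : Type*} [Ring A] {m : ℕ} (x : Fin m → A) :
    ∑ σ : Equiv.Perm (Fin m), (List.ofFn fun k => x (σ k)).prod =
      ∑ T : Finset (Fin m), (-1 : ℤ) ^ #Tᶜ • (∑ i ∈ T, x i) ^ m := by
  simpa only [MultilinearMap.mkPiAlgebraFin_apply, List.ofFn_const, List.prod_replicate,
      Function.comp_def]
    using (MultilinearMap.mkPiAlgebraFin ℤ m A).sum_perm_apply_comp_eq x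

theorem sum_perm_prod_ofFn_eq_zero_of_pow_eq_zero {A : Type*} [Ring A] {m : ℕ}
    (S : AddSubmonoid A) (hS : ∀ a ∈ S, a ^ m = 0) (x : Fin m → A) (hx : ∀ k, x k ∈ S) :
    ∑ σ : Equiv.Perm (Fin m), (List.ofFn fun k => x (σ k)).prod = 0 := by
  rw [sum_perm_prod_ofFn_eq]
  exact sum_eq_zero fun T _ => by rw [hS _ (sum_mem fun i _ => hx i), smul_zero]

theorem XiE_eq_map (n p : ℕ) :
    XiE n p = (Espan n).map (RingQuot.mkAlgHom ℂ (XiRel n p)).toLinearMap := by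
  rw [XiE, Espan, Submodule.map_span, ← Set.range_comp]
  rfl

theorem pow_succ_eq_zero_of_mem_XiE {n p : ℕ} {x : Xi n p} (hx : x ∈ XiE n p) :
    x ^ (p + 1) = 0 := by
  rw [XiE_eq_map] at hx
  obtain ⟨ζ, hζ, rfl⟩ := hx
  have h := RingQuot.mkAlgHom_rel ℂ (XiRel.anti (p := p) ζ ζ hζ hζ)
  rw [map_add, map_mul, map_mul, map_pow, map_zero, ← pow_succ, ← pow_succ', ← two_smul ℂ] at h
  exact (smul_eq_zero.mp h).resolve_left two_ne_zero

theorem stmt_1_general (n p : ℕ)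
    (ξ : Fin (p + 1) → Xi n p) (hξ : ∀ k, ξ k ∈ XiE n p) :
    ∑ σ : Equiv.Perm (Fin (p + 1)), (List.ofFn fun k => ξ (σ k)).prod = 0 :=
  sum_perm_prod_ofFn_eq_zero_of_pow_eq_zero (XiE n p).toAddSubmonoid
    (fun _ => pow_succ_eq_zero_of_mem_XiE) ξ hξ

/-- For any `ξ_1, …, ξ_{p+1}` in the span of the generators of `Ξ_n(p)`,
the symmetrized product `Σ_{σ ∈ Sym(p+1)} ξ_{σ(1)}⋯ξ_{σ(p+1)}` vanishes. -/
theorem stmt_1 (n p : ℕ) (hn : 0 < n) (hp : 0 < p)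
    (ξ : Fin (p + 1) → Xi n p) (hξ : ∀ k, ξ k ∈ XiE n p) :
    ∑ σ : Equiv.Perm (Fin (p + 1)), (List.ofFn fun k => ξ (σ k)).prod = 0 :=
  stmt_1_general n p ξ hξ
end
end

section
/- For any ℓ ≥ 0 and any indices j_1, …, j_ℓ ∈ {1,…,n}, if there exists some j ∈ {1,…,n} that occurs at least p+1 times among j_1, …, j_ℓ, then the product ϑ_{j_1}·ϑ_{j_2}⋯ϑ_{j_ℓ} = 0 in Ξ_n(p). Consequently, Ξ_n(p) is finite-dimensional as a K-vector space. -/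
noncomputable section

open scoped BigOperators

-- auxiliary lemmas


def cmt (n p : ℕ) (a b : Fin n) : Xi n p :=
  vth n p a * vth n p b - vth n p b * vth n p a

lemma iota_mem (n : ℕ) (i : Fin n) : FreeAlgebra.ι ℂ i ∈ Espan n :=
  Submodule.subset_span (Set.mem_range_self i)

lemma cmt_central (n p : ℕ) (a b : Fin n) (x : Xi n p) :
    cmt n p a b * x = x * cmt n p a b := by
  obtain ⟨y, rfl⟩ := RingQuot.mkAlgHom_surjective ℂ (XiRel n p) x
  induction y using FreeAlgebra.induction with
  | grade0 r =>
      rw [AlgHom.commutes]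
      exact (Algebra.commutes r _).symm
  | grade1 i =>
      have h := RingQuot.mkAlgHom_rel ℂ
        (XiRel.central (p := p) (FreeAlgebra.ι ℂ i) (FreeAlgebra.ι ℂ a) (FreeAlgebra.ι ℂ b)
          (iota_mem n i) (iota_mem n a) (iota_mem n b))
      simp only [map_sub, map_mul, map_zero] at h
      have h2 : vth n p i * cmt n p a b - cmt n p a b * vth n p i = 0 := by
        simpa [cmt, vth] using h
      show cmt n p a b * vth n p i = vth n p i * cmt n p a b
      linear_combination (norm := noncomm_ring) -h2
  | mul u v hu hv =>
      rw [map_mul, ← mul_assoc, hu, mul_assoc, hv, mul_assoc]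
  | add u v hu hv =>
      rw [map_add, mul_add, add_mul, hu, hv]

lemma prod_central (n p : ℕ) (j : Fin n) (cs : List (Fin n)) (x : Xi n p) :
    (cs.map (cmt n p j)).prod * x = x * (cs.map (cmt n p j)).prod := by
  induction cs with
  | nil => simp
  | cons a cs ih =>
      simp only [List.map_cons, List.prod_cons]
      rw [mul_assoc, ih, ← mul_assoc, cmt_central, mul_assoc]

lemma vth_pow_succ_zero (n p : ℕ) (hp : 0 < p) (j : Fin n) :
    vth n p j ^ (p + 1) = 0 := by
  have h := RingQuot.mkAlgHom_rel ℂ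
    (XiRel.anti (p := p) (FreeAlgebra.ι ℂ j) (FreeAlgebra.ι ℂ j) (iota_mem n j) (iota_mem n j))
  simp only [map_add, map_mul, map_pow, map_zero] at h
  have h2 : vth n p j ^ p * vth n p j + vth n p j * vth n p j ^ p = 0 := by
    simpa [vth] using h
  rw [← pow_succ, ← pow_succ'] at h2
  have h3 : (2 : ℂ) • (vth n p j ^ (p + 1)) = 0 := by
    rw [two_smul]; exact h2
  simpa using h3

lemma swap_pow (n p : ℕ) (j a : Fin n) (m : ℕ) :
    vth n p j ^ (m + 1) * vth n p a =
      vth n p a * vth n p j ^ (m + 1) + (m + 1) • (cmt n p j a * vth n p j ^ m) := by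
  induction m with
  | zero =>
      simp [cmt]
  | succ m ih =>
      have hja : vth n p j * vth n p a = vth n p a * vth n p j + cmt n p j a := by
        simp [cmt]
      calc vth n p j ^ (m + 2) * vth n p a
          = vth n p j ^ (m + 1) * (vth n p j * vth n p a) := by
            rw [← mul_assoc, ← pow_succ]
        _ = vth n p j ^ (m + 1) * (vth n p a * vth n p j) +
              vth n p j ^ (m + 1) * cmt n p j a := by rw [hja, mul_add]
        _ = (vth n p j ^ (m + 1) * vth n p a) * vth n p j +
              cmt n p j a * vth n p j ^ (m + 1) := by
            rw [← mul_assoc, cmt_central]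
        _ = (vth n p a * vth n p j ^ (m + 1) + (m + 1) • (cmt n p j a * vth n p j ^ m)) *
              vth n p j + cmt n p j a * vth n p j ^ (m + 1) := by rw [ih]
        _ = vth n p a * vth n p j ^ (m + 2) +
              ((m + 1) • (cmt n p j a * vth n p j ^ (m + 1)) +
                cmt n p j a * vth n p j ^ (m + 1)) := by
            rw [add_mul, smul_mul_assoc, mul_assoc, ← pow_succ, mul_assoc, ← pow_succ,
              add_assoc]
        _ = vth n p a * vth n p j ^ (m + 2) + (m + 2) • (cmt n p j a * vth n p j ^ (m + 1)) := by
            rw [succ_nsmul (cmt n p j a * vth n p j ^ (m + 1)) (m + 1)]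

lemma core (n p : ℕ) (hp : 0 < p) (j : Fin n) (cs : List (Fin n)) (m : ℕ)
    (h : p + 1 ≤ cs.length + m) :
    (cs.map (cmt n p j)).prod * vth n p j ^ m = 0 := by
  induction cs generalizing m with
  | nil =>
      simp only [List.map_nil, List.prod_nil, one_mul]
      simp only [List.length_nil, zero_add] at h
      obtain ⟨k, rfl⟩ : ∃ k, m = (p + 1) + k := ⟨m - (p + 1), by omega⟩
      rw [pow_add, vth_pow_succ_zero n p hp, zero_mul]
  | cons a cs ih =>
      have H : (cs.map (cmt n p j)).prod * vth n p j ^ (m + 1) = 0 :=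
        ih (m + 1) (by simp only [List.length_cons] at h; omega)
      have H2 : (cs.map (cmt n p j)).prod *
          (vth n p j ^ (m + 1) * vth n p a - vth n p a * vth n p j ^ (m + 1)) = 0 := by
        rw [mul_sub, ← mul_assoc, H, zero_mul, ← mul_assoc,
          prod_central n p j cs (vth n p a), mul_assoc, H, mul_zero, sub_zero]
      rw [swap_pow, add_sub_cancel_left, mul_smul_comm] at H2
      have H4 : (cs.map (cmt n p j)).prod * (cmt n p j a * vth n p j ^ m) = 0 := by
        have := H2
        rw [← Nat.cast_smul_eq_nsmul ℂ] at this
        exact (smul_eq_zero.mp this).resolve_left (by exact_mod_cast Nat.succ_ne_zero m)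
      simp only [List.map_cons, List.prod_cons]
      calc cmt n p j a * (cs.map (cmt n p j)).prod * vth n p j ^ m
          = (cs.map (cmt n p j)).prod * (cmt n p j a * vth n p j ^ m) := by
            rw [cmt_central, mul_assoc]
        _ = 0 := H4

lemma main_lemma (n p : ℕ) (hp : 0 < p) (j : Fin n) (w : List (Fin n)) :
    ∀ (cs : List (Fin n)) (m : ℕ), p + 1 ≤ cs.length + m + w.count j →
    (cs.map (cmt n p j)).prod * (vth n p j ^ m * (w.map (vth n p)).prod) = 0 := by
  induction w with
  | nil =>
      intro cs m h
      simp only [List.count_nil, add_zero] at h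
      simp only [List.map_nil, List.prod_nil, mul_one]
      exact core n p hp j cs m h
  | cons a w ih =>
      intro cs m h
      simp only [List.map_cons, List.prod_cons]
      by_cases haj : a = j
      · subst haj
        have hc : (a :: w).count a = w.count a + 1 := by simp [List.count_cons]
        rw [hc] at h
        have := ih cs (m + 1) (by omega)
        calc (cs.map (cmt n p a)).prod * (vth n p a ^ m * (vth n p a * (w.map (vth n p)).prod))
            = (cs.map (cmt n p a)).prod * (vth n p a ^ (m + 1) * (w.map (vth n p)).prod) := by
              rw [pow_succ, mul_assoc]
          _ = 0 := this
      · have hc : (a :: w).count j = w.count j := by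
          simp [List.count_cons, haj, Ne.symm haj]
        rw [hc] at h
        match m with
        | 0 =>
            have h0 := ih cs 0 (by omega)
            rw [pow_zero, one_mul] at h0 ⊢
            calc (cs.map (cmt n p j)).prod * (vth n p a * (w.map (vth n p)).prod)
                = vth n p a * ((cs.map (cmt n p j)).prod * (w.map (vth n p)).prod) := by
                  rw [← mul_assoc, prod_central, mul_assoc]
              _ = 0 := by rw [h0, mul_zero]
        | m + 1 =>
            have h1 := ih cs (m + 1) (by omega)
            have h2 := ih (a :: cs) m (by simp only [List.length_cons] at h ⊢; omega)
            simp only [List.map_cons, List.prod_cons] at h2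
            calc (cs.map (cmt n p j)).prod *
                  (vth n p j ^ (m + 1) * (vth n p a * (w.map (vth n p)).prod))
                = (cs.map (cmt n p j)).prod *
                    ((vth n p j ^ (m + 1) * vth n p a) * (w.map (vth n p)).prod) := by
                  rw [mul_assoc]
              _ = (cs.map (cmt n p j)).prod *
                    ((vth n p a * vth n p j ^ (m + 1) +
                      (m + 1) • (cmt n p j a * vth n p j ^ m)) * (w.map (vth n p)).prod) := by
                  rw [swap_pow]
              _ = vth n p a * ((cs.map (cmt n p j)).prod *
                      (vth n p j ^ (m + 1) * (w.map (vth n p)).prod)) +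
                  (m + 1) • (cmt n p j a * ((cs.map (cmt n p j)).prod *
                      (vth n p j ^ m * (w.map (vth n p)).prod))) := by
                  rw [add_mul, mul_add, smul_mul_assoc, mul_smul_comm]
                  congr 1
                  · rw [← mul_assoc, ← mul_assoc, prod_central n p j cs (vth n p a),
                      mul_assoc, mul_assoc]
                  · congr 1
                    rw [← mul_assoc, ← mul_assoc, ← cmt_central n p j a, mul_assoc, mul_assoc]
              _ = 0 := by
                  have h2' : cmt n p j a * ((cs.map (cmt n p j)).prod *
                      (vth n p j ^ m * (w.map (vth n p)).prod)) = 0 := by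
                    rw [mul_assoc] at h2
                    exact h2
                  rw [h1, h2', mul_zero, smul_zero, add_zero]

lemma word_zero (n p : ℕ) (hp : 0 < p) (j : Fin n) (w : List (Fin n))
    (h : p + 1 ≤ w.count j) : (w.map (vth n p)).prod = 0 := by
  have := main_lemma n p hp j w [] 0 (by simpa using h)
  simpa using this

lemma count_ofFn {n ℓ : ℕ} (js : Fin ℓ → Fin n) (j : Fin n) :
    (List.ofFn js).count j = (Finset.univ.filter fun k => js k = j).card := by
  rw [List.ofFn_eq_map, Fin.univ_def]
  simp only [List.count, List.countP_map]
  rw [show ((· == j) ∘ js) = (fun b => decide (js b = j)) from funext fun k => by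
    exact Bool.beq_eq_decide_eq _ _]
  simp [Finset.card, Finset.filter, List.countP_eq_length_filter]

/-- The set of "short" monomials. -/
def shortMon (n p : ℕ) : Set (Xi n p) :=
  (fun w : List (Fin n) => (w.map (vth n p)).prod) '' {w : List (Fin n) | w.length ≤ n * p}

lemma monomial_mem_span (n p : ℕ) (hp : 0 < p) (w : List (Fin n)) :
    (w.map (vth n p)).prod ∈ Submodule.span ℂ (shortMon n p) := by
  by_cases hw : ∃ j : Fin n, p + 1 ≤ w.count j
  · obtain ⟨j, hj⟩ := hw
    rw [word_zero n p hp j w hj]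
    exact Submodule.zero_mem _
  · push_neg at hw
    apply Submodule.subset_span
    refine ⟨w, ?_, rfl⟩
    have hlen : w.length = ∑ j : Fin n, w.count j := by
      have h1 := Multiset.sum_count_eq_card (s := (Finset.univ : Finset (Fin n)))
        (m := (↑w : Multiset (Fin n))) (fun a _ => Finset.mem_univ a)
      simpa using h1.symm
    have hle : ∀ j : Fin n, w.count j ≤ p := fun j => by
      have := hw j; omega
    calc w.length = ∑ j : Fin n, w.count j := hlen
      _ ≤ ∑ _j : Fin n, p := Finset.sum_le_sum fun j _ => hle j
      _ = n * p := by simp [Finset.sum_const, Finset.card_univ, mul_comm]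

lemma span_shortMon (n p : ℕ) (hp : 0 < p) :
    Submodule.span ℂ (shortMon n p) = ⊤ := by
  rw [eq_top_iff]
  rintro x -
  obtain ⟨y, rfl⟩ := RingQuot.mkAlgHom_surjective ℂ (XiRel n p) x
  induction y using FreeAlgebra.induction with
  | grade0 r =>
      rw [AlgHom.commutes, Algebra.algebraMap_eq_smul_one]
      refine Submodule.smul_mem _ _ ?_
      have := monomial_mem_span n p hp []
      simpa using this
  | grade1 i =>
      have := monomial_mem_span n p hp [i]
      simpa [vth] using this
  | mul u v hu hv =>
      rw [map_mul]
      have hmem := Submodule.mul_mem_mul hu hv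
      rw [Submodule.span_mul_span] at hmem
      refine Submodule.span_le.mpr ?_ hmem
      rintro z ⟨z1, ⟨w1, hw1, rfl⟩, z2, ⟨w2, hw2, rfl⟩, rfl⟩
      dsimp only
      have : (w1.map (vth n p)).prod * (w2.map (vth n p)).prod
          = ((w1 ++ w2).map (vth n p)).prod := by
        rw [List.map_append, List.prod_append]
      rw [this]
      exact monomial_mem_span n p hp (w1 ++ w2)
  | add u v hu hv =>
      rw [map_add]
      exact Submodule.add_mem _ hu hv

/-- Any monomial `ϑ_{j_1}⋯ϑ_{j_ℓ}` in which some generator occurs at least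
`p+1` times vanishes in `Ξ_n(p)`; consequently `Ξ_n(p)` is finite-dimensional over `ℂ`. -/
theorem stmt_2 (n p : ℕ) (hn : 0 < n) (hp : 0 < p) :
    (∀ (ℓ : ℕ) (js : Fin ℓ → Fin n),
      (∃ j : Fin n, p + 1 ≤ (Finset.univ.filter fun k => js k = j).card) →
      (List.ofFn fun k => vth n p (js k)).prod = 0) ∧
    FiniteDimensional ℂ (Xi n p) := by
  constructor
  · rintro ℓ js ⟨j, hj⟩
    rw [← count_ofFn js j] at hj
    have h0 : (List.ofFn fun k => vth n p (js k)) = (List.ofFn js).map (vth n p) := by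
      rw [List.ofFn_eq_map, List.ofFn_eq_map, List.map_map]
      rfl
    rw [h0]
    exact word_zero n p hp j (List.ofFn js) hj
  · have hfin : (shortMon n p).Finite :=
      Set.Finite.image _ (List.finite_length_le (Fin n) (n * p))
    have hfg : (⊤ : Submodule ℂ (Xi n p)).FG := by
      refine ⟨hfin.toFinset, ?_⟩
      rw [Set.Finite.coe_toFinset]
      exact span_shortMon n p hp
    exact Module.finite_def.mpr hfg
end
end

section
/- For every i ∈ {1,…,n}, every s with 1 ≤ s ≤ p+1, and all indices j_1, …, j_s ∈ {1,…,n}, one has ϑ_i^{p+1−s} · [ϑ_{j_1}, ϑ_i]·[ϑ_{j_2}, ϑ_i]⋯[ϑ_{j_s}, ϑ_i] = 0 in Ξ_n(p). -/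
/-!
Write `T = ϑ_i`. Commutators of generators commute with every generator, so `T` commutes with
`[T, e]` and `[T^{k+1}, e] = (k+1) T^k [T, e]`. If `T^{k+1} L = 0` for some `L` commuting with `e`,
multiplying this identity by `L` kills the left-hand side, hence `T^k [e, T] L = 0` after dividing
by `k + 1`: each commutator factor lowers the exponent by one. The induction starts from
`T^{p+1} = 0`, which is the relation `ξ^p η + η ξ^p = 0` with `ξ = η = T`, halved.
-/

noncomputable section

open scoped BigOperators

section CommutatorCalculus

variable {A : Type*} [Ring A]

lemma brk_swap (x y : A) : brk y x = -brk x y := (neg_sub _ _).symm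

lemma brk_pow_succ_left {T E : A} (hc : Commute T (brk T E)) (m : ℕ) :
    brk (T ^ (m + 1)) E = (m + 1) • (T ^ m * brk T E) := by
  induction m with
  | zero => simp
  | succ m ih =>
    have hsplit : brk (T ^ (m + 2)) E = T * brk (T ^ (m + 1)) E + brk T E * T ^ (m + 1) := by
      simp only [brk, pow_succ' T (m + 1)]
      noncomm_ring
    rw [hsplit, ih, mul_smul_comm, ← mul_assoc, ← pow_succ', ← (hc.pow_left (m + 1)).eq,
      ← succ_nsmul]

variable [IsAddTorsionFree A]

lemma pow_mul_brk_mul_eq_zero {T E L : A} {k : ℕ} (hc : Commute T (brk E T))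
    (hLE : Commute L E) (h : T ^ (k + 1) * L = 0) :
    T ^ k * (brk E T * L) = 0 := by
  rw [brk_swap] at hc ⊢
  have hmul : (k + 1) • (T ^ k * (brk T E * L)) = 0 :=
    calc (k + 1) • (T ^ k * (brk T E * L)) = brk (T ^ (k + 1)) E * L := by
          rw [brk_pow_succ_left (Commute.neg_right_iff.mp hc), smul_mul_assoc, mul_assoc]
      _ = T ^ (k + 1) * L * E - E * (T ^ (k + 1) * L) := by
          rw [brk, sub_mul, mul_assoc, mul_assoc, mul_assoc, hLE.eq]
      _ = 0 := by rw [h, zero_mul, mul_zero, sub_zero]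
  rw [neg_mul, mul_neg, neg_eq_zero]
  exact (nsmul_eq_zero_iff.mp hmul).resolve_right k.succ_ne_zero

lemma pow_mul_prod_map_brk_eq_zero {S : Set A}
    (hS : ∀ x ∈ S, ∀ y ∈ S, ∀ z ∈ S, Commute x (brk y z)) {T : A} (hT : T ∈ S) {N : ℕ}
    (hN : T ^ N = 0) (l : List A) (hl : ∀ e ∈ l, e ∈ S) (m : ℕ) (hm : N ≤ m + l.length) :
    T ^ m * (l.map (brk · T)).prod = 0 := by
  induction l generalizing m with
  | nil => simpa using pow_eq_zero_of_le hm hN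
  | cons e l ih =>
    have he : e ∈ S := hl e List.mem_cons_self
    have hlS : ∀ e ∈ l, e ∈ S := fun e' he' => hl e' (List.mem_cons_of_mem _ he')
    have hLe : Commute (l.map (brk · T)).prod e := Commute.list_prod_left _ _ fun x hx => by
      obtain ⟨e', he', rfl⟩ := List.mem_map.mp hx
      exact (hS e he e' (hlS e' he') T hT).symm
    rw [List.map_cons, List.prod_cons]
    refine pow_mul_brk_mul_eq_zero (hS T hT e he T hT) hLe (ih hlS (m + 1) ?_)
    simp only [List.length_cons] at hm
    omega

end CommutatorCalculus

lemma mem_Espan {n : ℕ} (a : Fin n) : FreeAlgebra.ι ℂ a ∈ Espan n :=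
  Submodule.subset_span ⟨a, rfl⟩

lemma vth_pow_mul_add_mul_pow (n p : ℕ) (a b : Fin n) :
    vth n p a ^ p * vth n p b + vth n p b * vth n p a ^ p = 0 := by
  simpa [vth] using RingQuot.mkAlgHom_rel ℂ
    (XiRel.anti (p := p) _ _ (mem_Espan a) (mem_Espan b))

lemma commute_vth_brk (n p : ℕ) (a b c : Fin n) :
    Commute (vth n p a) (brk (vth n p b) (vth n p c)) := by
  have h := RingQuot.mkAlgHom_rel ℂ
    (XiRel.central (p := p) _ _ _ (mem_Espan a) (mem_Espan b) (mem_Espan c))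
  simpa [vth, brk, sub_eq_zero, commute_iff_eq] using h

instance (n p : ℕ) : IsAddTorsionFree (Xi n p) := .of_module_rat _

lemma vth_pow_succ_eq_zero (n p : ℕ) (i : Fin n) : vth n p i ^ (p + 1) = 0 := by
  have h := vth_pow_mul_add_mul_pow n p i i
  rw [← pow_succ, ← pow_succ', ← two_nsmul] at h
  exact (nsmul_eq_zero_iff.mp h).resolve_right two_ne_zero

theorem stmt_4_general (n p : ℕ)
    (i : Fin n) (s : ℕ) (js : Fin s → Fin n) :
    vth n p i ^ (p + 1 - s) *
      (List.ofFn fun t => brk (vth n p (js t)) (vth n p i)).prod = 0 := by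
  have hcentral : ∀ x ∈ Set.range (vth n p), ∀ y ∈ Set.range (vth n p),
      ∀ z ∈ Set.range (vth n p), Commute x (brk y z) := by
    rintro _ ⟨a, rfl⟩ _ ⟨b, rfl⟩ _ ⟨c, rfl⟩
    exact commute_vth_brk n p a b c
  have h := pow_mul_prod_map_brk_eq_zero hcentral (Set.mem_range_self i)
    (vth_pow_succ_eq_zero n p i) (List.ofFn (vth n p ∘ js)) (by simp) (p + 1 - s)
    (by simp only [List.length_ofFn]; omega)
  rwa [List.map_ofFn] at h

/-- For every `i`, every `1 ≤ s ≤ p+1` and indices `j_1, …, j_s`, one has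
`ϑ_i^{p+1−s} · [ϑ_{j_1}, ϑ_i]⋯[ϑ_{j_s}, ϑ_i] = 0` in `Ξ_n(p)`. -/
theorem stmt_4 (n p : ℕ) (hn : 0 < n) (hp : 0 < p)
    (i : Fin n) (s : ℕ) (hs1 : 1 ≤ s) (hs2 : s ≤ p + 1) (js : Fin s → Fin n) :
    vth n p i ^ (p + 1 - s) *
      (List.ofFn fun t => brk (vth n p (js t)) (vth n p i)).prod = 0 :=
  stmt_4_general n p i s js
end
end

section
/- In Λ_n(p) the following hold: (i) [θ_k, [θ_i, θ_j]] = 0 for all i, j, k ∈ {1,…,n}; and (ii) for any scalars c_1, …, c_n ∈ K, setting θ = Σ_{i=1}^n c_i·θ_i, one has θ^p·θ_i = −θ_i·θ^p for all i. -/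
noncomputable section

open scoped BigOperators

/-- Defining relations of the `ℤ₂^p`-graded commutative algebra `Λ_n(p)`:
`θ_i^{(α)}·θ_j^{(β)} = (−1)^{δ_{αβ}}·θ_j^{(β)}·θ_i^{(α)}`. -/
inductive LamRel (n p : ℕ) : FreeAlgebra ℂ (Fin n × Fin p) → FreeAlgebra ℂ (Fin n × Fin p) → Prop
  | comm : ∀ (i j : Fin n) (α β : Fin p),
      LamRel n p (FreeAlgebra.ι ℂ (i, α) * FreeAlgebra.ι ℂ (j, β))
        ((if α = β then (-1 : ℂ) else 1) • (FreeAlgebra.ι ℂ (j, β) * FreeAlgebra.ι ℂ (i, α)))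

/-- The algebra `Λ_n(p)`. -/
abbrev Lam (n p : ℕ) : Type := RingQuot (LamRel n p)

/-- The generators `θ_i^{(α)}` of `Λ_n(p)`. -/
def θc (n p : ℕ) (i : Fin n) (α : Fin p) : Lam n p :=
  RingQuot.mkAlgHom ℂ (LamRel n p) (FreeAlgebra.ι ℂ (i, α))

/-- `θ_i = Σ_{α=1}^p θ_i^{(α)}`. -/
def θv (n p : ℕ) (i : Fin n) : Lam n p := ∑ α : Fin p, θc n p i α

/-- The inhomogeneous subalgebra `IΛ_n(p)` generated by `θ_1, …, θ_n`. -/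
def ILam (n p : ℕ) : Subalgebra ℂ (Lam n p) :=
  Algebra.adjoin ℂ (Set.range (θv n p))

/-- `Δ_i = Σ_{α=1}^p ∂_i^{(α)}`. -/
def Δop (n p : ℕ) (Dp : Fin n → Fin p → Module.End ℂ (Lam n p)) (i : Fin n) :
    Module.End ℂ (Lam n p) := ∑ α : Fin p, Dp i α

/-! ### Auxiliary lemmas -/

lemma comm_ne {n p : ℕ} (i j : Fin n) {α β : Fin p} (h : α ≠ β) :
    θc n p i α * θc n p j β = θc n p j β * θc n p i α := by
  have h2 := RingQuot.mkAlgHom_rel ℂ (LamRel.comm i j α β)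
  rw [if_neg h, one_smul, map_mul, map_mul] at h2
  simpa [θc] using h2

lemma anticomm {n p : ℕ} (i j : Fin n) (α : Fin p) :
    θc n p i α * θc n p j α = -(θc n p j α * θc n p i α) := by
  have h2 := RingQuot.mkAlgHom_rel ℂ (LamRel.comm i j α α)
  rw [if_pos rfl, neg_one_smul, map_neg, map_mul, map_mul] at h2
  simpa [θc] using h2

/-- Key lemma: a sum of `card + 1` pairwise-commuting square-zero elements is nilpotent. -/
lemma sum_pow_card_succ {A : Type*} [Ring A] {ι : Type*} [DecidableEq ι] (f : ι → A)
    (hc : ∀ a b, Commute (f a) (f b)) (hs : ∀ a, f a * f a = 0)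
    (s : Finset ι) : (∑ a ∈ s, f a) ^ (s.card + 1) = 0 := by
  induction s using Finset.induction_on with
  | empty => simp
  | @insert a t ha ih =>
    rw [Finset.sum_insert ha, Finset.card_insert_of_notMem ha]
    have hC : Commute (f a) (∑ b ∈ t, f b) :=
      Commute.sum_right _ _ _ (fun b _ => hc a b)
    rw [hC.add_pow]
    apply Finset.sum_eq_zero
    intro k _
    match k with
    | 0 =>
      rw [pow_zero, one_mul, Nat.sub_zero, pow_succ, ih, zero_mul, zero_mul]
    | 1 =>
      have : t.card + 1 + 1 - 1 = t.card + 1 := by omega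
      rw [pow_one, this, ih, mul_zero, zero_mul]
    | (k + 2) =>
      have hz : f a ^ (k + 2) = 0 := by
        rw [pow_add, pow_two, hs, mul_zero]
      rw [hz, zero_mul, zero_mul]

lemma add_pow_sq_zero {A : Type*} [Ring A] (v U : A) (h : Commute v U) (hv : v * v = 0)
    (q : ℕ) : (U + v) ^ (q + 1) = U ^ (q + 1) + v * U ^ q * ((q + 1 : ℕ) : A) := by
  rw [add_comm U v, h.add_pow, Finset.sum_range_succ', Finset.sum_range_succ']
  have hz : ∀ i ∈ Finset.range q,
      v ^ (i + 1 + 1) * U ^ (q + 1 - (i + 1 + 1)) * ((q + 1).choose (i + 1 + 1) : A) = 0 := by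
    intro i _
    have : v ^ (i + 1 + 1) = 0 := by rw [pow_succ, pow_succ, mul_assoc, hv, mul_zero]
    rw [this, zero_mul, zero_mul]
  rw [Finset.sum_eq_zero hz, zero_add]
  simp [Nat.choose_one_right, add_comm]

lemma sub_pow_sq_zero {A : Type*} [Ring A] (v U : A) (h : Commute v U) (hv : v * v = 0)
    (q : ℕ) : (U - v) ^ (q + 1) = U ^ (q + 1) - v * U ^ q * ((q + 1 : ℕ) : A) := by
  rw [sub_eq_add_neg,
    add_pow_sq_zero (-v) U h.neg_left (by rw [neg_mul_neg]; exact hv) q,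
    neg_mul, sub_eq_add_neg, neg_mul]

def φf (n p : ℕ) (c : Fin n → ℂ) (α : Fin p) : Lam n p := ∑ j, c j • θc n p j α

lemma φ_mul_comm {n p : ℕ} (c : Fin n → ℂ) {α β : Fin p} (h : α ≠ β) :
    φf n p c α * φf n p c β = φf n p c β * φf n p c α := by
  unfold φf
  rw [Finset.sum_mul_sum, Finset.sum_mul_sum, Finset.sum_comm]
  refine Finset.sum_congr rfl fun a _ => Finset.sum_congr rfl fun b _ => ?_
  simp only [smul_mul_assoc, mul_smul_comm]
  rw [comm_ne b a h]
  exact smul_comm _ _ _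

lemma φ_sq {n p : ℕ} (c : Fin n → ℂ) (α : Fin p) : φf n p c α * φf n p c α = 0 := by
  set S := φf n p c α * φf n p c α with hS
  have key : S = -S := by
    rw [hS]
    unfold φf
    conv_lhs => rw [Finset.sum_mul_sum]
    conv_rhs => rw [Finset.sum_mul_sum, Finset.sum_comm]
    rw [← Finset.sum_neg_distrib]
    refine Finset.sum_congr rfl fun a _ => ?_
    rw [← Finset.sum_neg_distrib]
    refine Finset.sum_congr rfl fun b _ => ?_
    simp only [smul_mul_assoc, mul_smul_comm]
    rw [anticomm a b α, smul_neg, smul_neg, smul_comm]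
  have h2 : (2 : ℂ) • S = 0 := by
    rw [two_smul]
    nth_rewrite 2 [key]
    rw [add_neg_cancel]
  have := smul_eq_zero.mp h2
  simpa using this.resolve_left two_ne_zero

lemma φ_commute {n p : ℕ} (c : Fin n → ℂ) (α β : Fin p) :
    Commute (φf n p c α) (φf n p c β) := by
  rcases eq_or_ne α β with rfl | h
  · exact Commute.refl _
  · exact φ_mul_comm c h

lemma φ_comm_θc {n p : ℕ} (c : Fin n → ℂ) (i : Fin n) {β γ : Fin p} (h : β ≠ γ) :
    φf n p c β * θc n p i γ = θc n p i γ * φf n p c β := by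
  unfold φf
  rw [Finset.sum_mul, Finset.mul_sum]
  refine Finset.sum_congr rfl fun j _ => ?_
  rw [smul_mul_assoc, comm_ne j i h, mul_smul_comm]

lemma φ_anti_θc {n p : ℕ} (c : Fin n → ℂ) (i : Fin n) (γ : Fin p) :
    φf n p c γ * θc n p i γ = -(θc n p i γ * φf n p c γ) := by
  unfold φf
  rw [Finset.sum_mul, Finset.mul_sum, ← Finset.sum_neg_distrib]
  refine Finset.sum_congr rfl fun j _ => ?_
  rw [smul_mul_assoc, anticomm j i γ, smul_neg, mul_smul_comm]

lemma theta_eq {n p : ℕ} (c : Fin n → ℂ) :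
    (∑ j, c j • θv n p j) = ∑ α : Fin p, φf n p c α := by
  unfold θv φf
  simp only [Finset.smul_sum]
  exact Finset.sum_comm

lemma pow_anti {n p : ℕ} (hp : 0 < p) (c : Fin n → ℂ) (i : Fin n) (γ : Fin p) :
    (∑ α : Fin p, φf n p c α) ^ p * θc n p i γ =
      -(θc n p i γ * (∑ α : Fin p, φf n p c α) ^ p) := by
  obtain ⟨q, rfl⟩ : ∃ q, p = q + 1 := ⟨p - 1, by omega⟩
  set v := φf n (q + 1) c γ with hv
  set U := ∑ β ∈ Finset.univ.erase γ, φf n (q + 1) c β with hU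
  have hTU : (∑ α : Fin (q + 1), φf n (q + 1) c α) = U + v := by
    rw [hU, hv, ← Finset.add_sum_erase _ _ (Finset.mem_univ γ)]
    exact add_comm _ _
  have hCvU : Commute v U := by
    refine Commute.sum_right _ _ _ fun b hb => ?_
    exact φ_mul_comm c (Finset.ne_of_mem_erase hb).symm
  have hv2 : v * v = 0 := φ_sq c γ
  have hUq : U ^ (q + 1) = 0 := by
    have := sum_pow_card_succ (φf n (q + 1) c) (φ_commute c) (φ_sq c) (Finset.univ.erase γ)
    rwa [Finset.card_erase_of_mem (Finset.mem_univ γ), Finset.card_univ, Fintype.card_fin,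
      Nat.add_sub_cancel] at this
  -- semiconjugation: (U + v) * θ = θ * (U - v)
  have hUA : U * θc n (q + 1) i γ = θc n (q + 1) i γ * U := by
    rw [hU, Finset.sum_mul, Finset.mul_sum]
    exact Finset.sum_congr rfl fun b hb => φ_comm_θc c i (Finset.ne_of_mem_erase hb)
  have hvA : v * θc n (q + 1) i γ = -(θc n (q + 1) i γ * v) := φ_anti_θc c i γ
  have hsc : SemiconjBy (θc n (q + 1) i γ) (U - v) (U + v) := by
    show θc n (q + 1) i γ * (U - v) = (U + v) * θc n (q + 1) i γ
    calc θc n (q + 1) i γ * (U - v)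
        = θc n (q + 1) i γ * U - θc n (q + 1) i γ * v := mul_sub _ _ _
      _ = U * θc n (q + 1) i γ + v * θc n (q + 1) i γ := by
          rw [hUA, hvA]; exact sub_eq_add_neg _ _
      _ = (U + v) * θc n (q + 1) i γ := (add_mul _ _ _).symm
  have hpow := (hsc.pow_right (q + 1)).symm
  -- hpow : (U + v) ^ (q+1) * θ = θ * (U - v) ^ (q+1)  -- check direction
  have e1 : (U + v) ^ (q + 1) = v * U ^ q * ((q + 1 : ℕ) : Lam n (q + 1)) := by
    rw [add_pow_sq_zero v U hCvU hv2 q, hUq, zero_add]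
  have e2 : (U - v) ^ (q + 1) = -((U + v) ^ (q + 1)) := by
    rw [sub_pow_sq_zero v U hCvU hv2 q, hUq, e1]
    exact zero_sub _
  rw [hTU]
  calc (U + v) ^ (q + 1) * θc n (q + 1) i γ
      = θc n (q + 1) i γ * (U - v) ^ (q + 1) := by
        have := hsc.pow_right (q + 1)
        exact this.symm
    _ = -(θc n (q + 1) i γ * (U + v) ^ (q + 1)) := by
        rw [e2]
        exact mul_neg (θc n (q + 1) i γ) ((U + v) ^ (q + 1))

lemma brk_vv {n p : ℕ} (i j : Fin n) :
    brk (θv n p i) (θv n p j) = ∑ α : Fin p, (2 : ℂ) • (θc n p i α * θc n p j α) := by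
  unfold brk θv
  rw [Finset.sum_mul_sum, Finset.sum_mul_sum]
  nth_rewrite 2 [Finset.sum_comm]
  rw [← Finset.sum_sub_distrib]
  refine Finset.sum_congr rfl fun α _ => ?_
  rw [← Finset.sum_sub_distrib]
  have : ∀ β : Fin p, θc n p i α * θc n p j β - θc n p j β * θc n p i α =
      if β = α then (2 : ℂ) • (θc n p i α * θc n p j α) else 0 := by
    intro β
    rcases eq_or_ne β α with rfl | h
    · rw [if_pos rfl, anticomm j i β, sub_neg_eq_add, two_smul]
    · rw [if_neg h, comm_ne i j h.symm, sub_self]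
  rw [Finset.sum_congr rfl fun β _ => this β]
  simp

/-- In `Λ_n(p)`: `[θ_k, [θ_i, θ_j]] = 0` for all `i, j, k`, and for any
scalars `c_1, …, c_n`, setting `θ = Σ c_i θ_i`, one has `θ^p·θ_i = −θ_i·θ^p` for all `i`. -/
theorem stmt_5 (n p : ℕ) (hn : 0 < n) (hp : 0 < p) :
    (∀ i j k : Fin n, brk (θv n p k) (brk (θv n p i) (θv n p j)) = 0) ∧
    (∀ c : Fin n → ℂ, ∀ i : Fin n,
      (∑ j, c j • θv n p j) ^ p * θv n p i = -(θv n p i * (∑ j, c j • θv n p j) ^ p)) := by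
  constructor
  · intro i j k
    rw [brk_vv]
    unfold brk θv
    rw [Finset.sum_mul_sum, Finset.sum_mul_sum]
    nth_rewrite 2 [Finset.sum_comm]
    rw [← Finset.sum_sub_distrib]
    apply Finset.sum_eq_zero
    intro γ _
    rw [← Finset.sum_sub_distrib]
    apply Finset.sum_eq_zero
    intro α _
    have key : θc n p k γ * (θc n p i α * θc n p j α) =
        (θc n p i α * θc n p j α) * θc n p k γ := by
      rcases eq_or_ne γ α with rfl | h
      · calc θc n p k γ * (θc n p i γ * θc n p j γ)
            = θc n p k γ * θc n p i γ * θc n p j γ := (mul_assoc _ _ _).symm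
          _ = -(θc n p i γ * θc n p k γ) * θc n p j γ := by rw [anticomm k i γ]
          _ = -(θc n p i γ * θc n p k γ * θc n p j γ) :=
              neg_mul (θc n p i γ * θc n p k γ) (θc n p j γ)
          _ = -(θc n p i γ * (θc n p k γ * θc n p j γ)) := by rw [mul_assoc]
          _ = -(θc n p i γ * -(θc n p j γ * θc n p k γ)) := by rw [anticomm k j γ]
          _ = -(-(θc n p i γ * (θc n p j γ * θc n p k γ))) := by
              exact congrArg (fun x : Lam n p => -x)
                (mul_neg (θc n p i γ) (θc n p j γ * θc n p k γ))
          _ = θc n p i γ * (θc n p j γ * θc n p k γ) := neg_neg _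
          _ = θc n p i γ * θc n p j γ * θc n p k γ := (mul_assoc _ _ _).symm
      · rw [← mul_assoc, comm_ne k i h, mul_assoc, comm_ne k j h, ← mul_assoc]
    simp only [mul_smul_comm, smul_mul_assoc]
    rw [key, sub_self]
  · intro c i
    rw [theta_eq c]
    unfold θv
    rw [Finset.mul_sum, Finset.sum_mul, ← Finset.sum_neg_distrib]
    exact Finset.sum_congr rfl fun γ _ => pow_anti hp c i γ
end
end

section
/- There exists a surjective unital K-algebra homomorphism ι_0 : Ξ_n(p) → IΛ_n(p) such that ι_0(ϑ_i) = θ_i for all i = 1, …, n. -/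
/-! Write `ξ = ∑ cᵢ θᵢ` as `∑_α ξ^(α)` with `ξ^(α) = ∑ cᵢ θᵢ^(α)`. Components of equal grade
anticommute, hence square to zero, and components of different grades commute. For a fixed
grade `β`, the rest `u = ∑_{α ≠ β} ξ^(α)` is a sum of `p - 1` commuting square-zero elements, so
`u ^ p = 0` and `ξ ^ p = p • ξ^(β) u^(p-1)`, which anticommutes with `η^(β)`; summing over `β`
gives `ξ^p η + η ξ^p = 0`. Likewise `[η, ζ] = ∑_β [η^(β), ζ^(β)]`, and `ξ^(α)` commutes with every
summand. So `ϑᵢ ↦ θᵢ` descends to `Ξ_n(p)`, and its range is generated by the `θᵢ`. -/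

noncomputable section

open scoped BigOperators

theorem Commute.add_pow_succ_of_mul_self_eq_zero {R : Type*} [Semiring R] {a u : R}
    (h : Commute a u) (ha : a * a = 0) (m : ℕ) : (a + u) ^ (m + 1) = u ^ (m + 1) + (m + 1) • (a * u ^ m) := by
  induction m with
  | zero => simp [add_comm]
  | succ m ih =>
    have hua : u ^ (m + 1) * a = a * u ^ (m + 1) := ((h.pow_right _).eq).symm
    have haua : a * u ^ m * a = 0 := by
      rw [mul_assoc, ← (h.pow_right m).eq, ← mul_assoc, ha, zero_mul]
    rw [pow_succ, ih, add_mul, mul_add, mul_add, smul_mul_assoc, smul_mul_assoc, hua, haua,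
      smul_zero, mul_assoc, ← pow_succ, ← pow_succ, succ_nsmul _ (m + 1)]
    abel

theorem Finset.sum_pow_card_succ_eq_zero {R ι : Type*} [Semiring R] {x : ι → R}
    (hx : ∀ α, x α * x α = 0) (hxx : Pairwise fun α β => Commute (x α) (x β)) (s : Finset ι) :
    (∑ α ∈ s, x α) ^ (s.card + 1) = 0 := by
  classical
  induction s using Finset.induction with
  | empty => simp
  | insert a s has ih =>
    rw [Finset.sum_insert has, Finset.card_insert_of_notMem has]
    refine Commute.add_pow_eq_zero_of_add_le_succ_of_pow_eq_zero
      (Commute.sum_right _ _ _ fun b hb => hxx (ne_of_mem_of_not_mem hb has).symm)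
      (by rw [sq, hx]) ih (by omega)

section GradedSums

variable {R ι : Type*} [Ring R] [Fintype ι]

theorem commute_mul_of_mul_eq_neg {a b c : R} (hb : a * b = -(b * a)) (hc : a * c = -(c * a)) :
    Commute a (b * c) := by
  rw [Commute, SemiconjBy, ← mul_assoc, hb, neg_mul, mul_assoc, hc, mul_neg, neg_neg, mul_assoc]

theorem sum_pow_card_mul_add_mul_sum_pow_card_eq_zero {x y : ι → R}
    (hx : ∀ α, x α * x α = 0) (hxx : Pairwise fun α β => Commute (x α) (x β))
    (hxy : ∀ α, x α * y α = -(y α * x α)) (hxy' : Pairwise fun α β => Commute (x α) (y β)) :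
    (∑ α, x α) ^ Fintype.card ι * ∑ β, y β + (∑ β, y β) * (∑ α, x α) ^ Fintype.card ι = 0 := by
  classical
  rw [Finset.mul_sum, Finset.sum_mul, ← Finset.sum_add_distrib]
  refine Finset.sum_eq_zero fun β hβ => ?_
  set u := ∑ α ∈ Finset.univ.erase β, x α
  set m := (Finset.univ.erase β).card
  have hu : u ^ (m + 1) = 0 := Finset.sum_pow_card_succ_eq_zero hx hxx _
  have hxu : Commute (x β) u :=
    Commute.sum_right _ _ _ fun α hα => hxx (Finset.ne_of_mem_erase hα).symm
  have huy : Commute u (y β) :=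
    Commute.sum_left _ _ _ fun α hα => hxy' (Finset.ne_of_mem_erase hα)
  have hpow : (∑ α, x α) ^ Fintype.card ι = (m + 1) • (x β * u ^ m) := by
    rw [← Finset.add_sum_erase _ _ hβ, ← Finset.card_univ, ← Finset.card_erase_add_one hβ,
      hxu.add_pow_succ_of_mul_self_eq_zero (hx β), hu, zero_add]
  rw [hpow, smul_mul_assoc, mul_smul_comm, ← smul_add, mul_assoc, (huy.pow_left m).eq,
    ← mul_assoc, hxy, neg_mul, mul_assoc, neg_add_cancel, smul_zero]

theorem sum_mul_sum_sub_sum_mul_sum {y z : ι → R}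
    (hyz : Pairwise fun α β => Commute (y α) (z β)) :
    (∑ α, y α) * (∑ β, z β) - (∑ β, z β) * (∑ α, y α) = ∑ α, (y α * z α - z α * y α) := by
  rw [Finset.sum_mul_sum, Finset.sum_mul_sum,
    Finset.sum_comm (s := Finset.univ) (t := Finset.univ) (f := fun β α => z β * y α),
    ← Finset.sum_sub_distrib]
  refine Finset.sum_congr rfl fun α _ => ?_
  rw [← Finset.sum_sub_distrib]
  exact Finset.sum_eq_single α (fun β _ hβ => sub_eq_zero_of_eq (hyz hβ.symm).eq) (by simp)

theorem commute_sum_sum_mul_sum_sub_sum_mul_sum {x y z : ι → R}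
    (hxy : ∀ α, x α * y α = -(y α * x α)) (hxy' : Pairwise fun α β => Commute (x α) (y β))
    (hxz : ∀ α, x α * z α = -(z α * x α)) (hxz' : Pairwise fun α β => Commute (x α) (z β))
    (hyz' : Pairwise fun α β => Commute (y α) (z β)) :
    Commute (∑ α, x α) ((∑ β, y β) * (∑ γ, z γ) - (∑ γ, z γ) * (∑ β, y β)) := by
  rw [sum_mul_sum_sub_sum_mul_sum hyz']
  refine Commute.sum_left _ _ _ fun α _ => Commute.sum_right _ _ _ fun β _ => ?_
  obtain rfl | hαβ := eq_or_ne α β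
  · exact (commute_mul_of_mul_eq_neg (hxy α) (hxz α)).sub_right
      (commute_mul_of_mul_eq_neg (hxz α) (hxy α))
  · exact ((hxy' hαβ).mul_right (hxz' hαβ)).sub_right ((hxz' hαβ).mul_right (hxy' hαβ))

end GradedSums

section Lam

variable (n p : ℕ)

def θcomb (c : Fin n → ℂ) (α : Fin p) : Lam n p := ∑ i, c i • θc n p i α

variable {n p}

theorem θc_mul_θc (i j : Fin n) (α β : Fin p) :
    θc n p i α * θc n p j β = (if α = β then (-1 : ℂ) else 1) • (θc n p j β * θc n p i α) := by
  simpa only [θc, map_mul, map_smul] using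
    RingQuot.mkAlgHom_rel ℂ (LamRel.comm (n := n) (p := p) i j α β)

theorem θcomb_mul_θcomb (c d : Fin n → ℂ) (α β : Fin p) :
    θcomb n p c α * θcomb n p d β =
      (if α = β then (-1 : ℂ) else 1) • (θcomb n p d β * θcomb n p c α) := by
  simp only [θcomb, Finset.sum_mul_sum, smul_mul_smul, Finset.smul_sum]
  rw [Finset.sum_comm]
  refine Finset.sum_congr rfl fun j _ => Finset.sum_congr rfl fun i _ => ?_
  rw [θc_mul_θc, smul_comm, mul_comm]

theorem θcomb_anticomm (c d : Fin n → ℂ) (α : Fin p) :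
    θcomb n p c α * θcomb n p d α = -(θcomb n p d α * θcomb n p c α) := by
  rw [θcomb_mul_θcomb, if_pos rfl, neg_one_smul ℂ (M := Lam n p)]

theorem θcomb_commute (c d : Fin n → ℂ) {α β : Fin p} (h : α ≠ β) :
    Commute (θcomb n p c α) (θcomb n p d β) := by
  rw [Commute, SemiconjBy, θcomb_mul_θcomb, if_neg h, one_smul]

theorem θcomb_mul_self (c : Fin n → ℂ) (α : Fin p) : θcomb n p c α * θcomb n p c α = 0 := by
  have h : (2 : ℂ) • (θcomb n p c α * θcomb n p c α) = 0 := by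
    rw [two_smul]
    nth_rewrite 1 [θcomb_anticomm]
    exact neg_add_cancel _
  exact (smul_eq_zero.mp h).resolve_left two_ne_zero

theorem sum_smul_θv (c : Fin n → ℂ) : ∑ i, c i • θv n p i = ∑ α, θcomb n p c α := by
  simp only [θv, θcomb, Finset.smul_sum]
  exact Finset.sum_comm

end Lam

theorem exists_lift_θv_eq_sum_θcomb {n p : ℕ} {x : FreeAlgebra ℂ (Fin n)} (hx : x ∈ Espan n) :
    ∃ c : Fin n → ℂ, FreeAlgebra.lift ℂ (θv n p) x = ∑ α, θcomb n p c α := by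
  have hmem := Submodule.mem_map_of_mem (f := (FreeAlgebra.lift ℂ (θv n p)).toLinearMap) hx
  rw [Espan, Submodule.map_span, ← Set.range_comp] at hmem
  obtain ⟨c, hc⟩ := (Submodule.mem_span_range_iff_exists_fun ℂ).mp hmem
  exact ⟨c, by simpa [sum_smul_θv] using hc.symm⟩

theorem lift_θv_eq_of_xiRel {n p : ℕ} ⦃x y : FreeAlgebra ℂ (Fin n)⦄ (h : XiRel n p x y) :
    FreeAlgebra.lift ℂ (θv n p) x = FreeAlgebra.lift ℂ (θv n p) y := by
  induction h with
  | anti ξ η hξ hη =>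
    obtain ⟨c, hc⟩ := exists_lift_θv_eq_sum_θcomb (p := p) hξ
    obtain ⟨d, hd⟩ := exists_lift_θv_eq_sum_θcomb (p := p) hη
    rw [map_zero, map_add, map_mul, map_mul, map_pow, hc, hd]
    simpa using sum_pow_card_mul_add_mul_sum_pow_card_eq_zero (θcomb_mul_self c)
      (fun _ _ => θcomb_commute c c) (θcomb_anticomm c d) (fun _ _ => θcomb_commute c d)
  | central ξ η ζ hξ hη hζ =>
    obtain ⟨a, ha⟩ := exists_lift_θv_eq_sum_θcomb (p := p) hξ
    obtain ⟨b, hb⟩ := exists_lift_θv_eq_sum_θcomb (p := p) hη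
    obtain ⟨c, hc⟩ := exists_lift_θv_eq_sum_θcomb (p := p) hζ
    rw [map_zero, map_sub, map_mul, map_mul, map_sub, map_mul, map_mul, ha, hb, hc]
    exact sub_eq_zero_of_eq (commute_sum_sum_mul_sum_sub_sum_mul_sum (θcomb_anticomm a b)
      (fun _ _ => θcomb_commute a b) (θcomb_anticomm a c) (fun _ _ => θcomb_commute a c)
      (fun _ _ => θcomb_commute b c)).eq

theorem stmt_6_general (n p : ℕ) :
    ∃ ι₀ : Xi n p →ₐ[ℂ] Lam n p,
      (∀ i, ι₀ (vth n p i) = θv n p i) ∧ ι₀.range = ILam n p := by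
  set ι₀ := RingQuot.liftAlgHom ℂ ⟨FreeAlgebra.lift ℂ (θv n p), lift_θv_eq_of_xiRel⟩
  have hF : ι₀.comp (RingQuot.mkAlgHom ℂ (XiRel n p)) = FreeAlgebra.lift ℂ (θv n p) :=
    AlgHom.ext fun x => RingQuot.liftAlgHom_mkAlgHom_apply ℂ _ _ x
  refine ⟨ι₀, fun i => ?_, ?_⟩
  · rw [vth, ← AlgHom.comp_apply, hF, FreeAlgebra.lift_ι_apply]
  · rw [ILam, Algebra.adjoin_range_eq_range_freeAlgebra_lift, ← hF, AlgHom.range_comp,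
      (AlgHom.range_eq_top _).mpr (RingQuot.mkAlgHom_surjective ℂ _), Algebra.map_top]

/-- There is a unital algebra homomorphism `ι_0 : Ξ_n(p) → Λ_n(p)` with
`ι_0(ϑ_i) = θ_i` for all `i`, whose range is exactly the subalgebra `IΛ_n(p)`
(i.e. `ι_0` is surjective onto `IΛ_n(p)`). -/
theorem stmt_6 (n p : ℕ) (hn : 0 < n) (hp : 0 < p) :
    ∃ ι₀ : Xi n p →ₐ[ℂ] Lam n p,
      (∀ i, ι₀ (vth n p i) = θv n p i) ∧ ι₀.range = ILam n p :=
  stmt_6_general n p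
end
end

section
/- The following operator identities hold in End_K(Λ_n(p)) for all i, j, k ∈ {1,…,n}: [Δ_k, [Δ_i, Δ_j]] = 0; [Δ_k, [L_{θ_i}, Δ_j]] = 2·δ_{ki}·Δ_j; and [L_{θ_k}, [L_{θ_i}, Δ_j]] = −2·δ_{kj}·L_{θ_i}, where [A, B] = A∘B − B∘A. -/
noncomputable section

open scoped BigOperators

/-!
Split `θ_i = Σ_α θ_i^{(α)}` and `Δ_j = Σ_α ∂_j^{(α)}` into colours `α`. Operators of different
colours commute, and within one colour the left multiplications and the derivations satisfy the
canonical anticommutation relations. Hence `[Δ_i, Δ_j] = 2 Σ_α ∂_i^{(α)} ∂_j^{(α)}` and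
`[θ_i, Δ_j] = 2 Σ_α θ_i^{(α)} ∂_j^{(α)} − δ_{ij} p`. A product of two operators of the same colour
commutes with every generator up to a single contraction term, because the two signs
`(−1)^{δ_{αγ}}` it picks up cancel; these contractions give the right-hand sides.
-/

open Finset

section brk

variable {R A : Type*} [CommRing R] [Ring A] [Algebra R A]

theorem brk_sum_left {ι : Type*} (s : Finset ι) (f : ι → A) (y : A) :
    brk (∑ m ∈ s, f m) y = ∑ m ∈ s, brk (f m) y := by
  simp only [brk, sum_mul, mul_sum, sum_sub_distrib]

theorem brk_sum_right {ι : Type*} (s : Finset ι) (x : A) (f : ι → A) :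
    brk x (∑ m ∈ s, f m) = ∑ m ∈ s, brk x (f m) := by
  simp only [brk, sum_mul, mul_sum, sum_sub_distrib]

theorem brk_smul_right (c : R) (x y : A) : brk x (c • y) = c • brk x y := by
  rw [brk, brk, mul_smul_comm, smul_mul_assoc, smul_sub]

theorem brk_sub_right (x y z : A) : brk x (y - z) = brk x y - brk x z := by
  simp only [brk, mul_sub, sub_mul]; abel

theorem brk_natCast_right (x : A) (m : ℕ) : brk x m = 0 :=
  sub_eq_zero.mpr (Nat.cast_commute m x).symm.eq

theorem brk_eq_of_mul_eq_smul_add {c : R} {x y d : A} (h : y * x = c • (x * y) + d) :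
    brk x y = (1 - c) • (x * y) - d := by
  rw [brk, h, sub_smul, one_smul]; abel

theorem brk_mul_of_mul_eq_smul_add {c : R} {x y z d : A} (hc : c * c = 1)
    (hy : x * y = c • (y * x) + d) (hz : x * z = c • (z * x)) : brk x (y * z) = d * z := by
  rw [brk, ← mul_assoc, hy, add_mul, smul_mul_assoc, mul_assoc, hz, mul_smul_comm,
    smul_smul, hc, one_smul, mul_assoc, add_sub_cancel_left]

theorem brk_mul_of_mul_eq_smul_of_mul_eq_smul_add {c : R} {x y z d : A}
    (hy : x * y = c • (y * x)) (hz : z * x = c • (x * z) + d) : brk x (y * z) = -(y * d) := by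
  rw [brk, ← mul_assoc, hy, mul_assoc, hz, mul_add, smul_mul_assoc, mul_smul_comm,
    mul_assoc, sub_add_cancel_left]

end brk

def commSign (R : Type*) [Ring R] {κ : Type*} [DecidableEq κ] (α β : κ) : R :=
  if α = β then -1 else 1

section commSign

variable {R : Type*} [Ring R] {κ : Type*} [DecidableEq κ]

theorem commSign_comm (α β : κ) : commSign R α β = commSign R β α := by
  simp only [commSign, eq_comm]

theorem commSign_mul_self (α β : κ) : commSign R α β * commSign R α β = 1 := by
  unfold commSign; split_ifs <;> simp

theorem one_sub_commSign (α β : κ) : 1 - commSign R α β = if α = β then 2 else 0 := by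
  unfold commSign; split_ifs <;> norm_num

end commSign

/-- Canonical anticommutation relations within each colour `γ : κ`; different colours commute. -/
structure IsCommutingCAR (R : Type*) [CommRing R] {A : Type*} [Ring A] [Algebra R A]
    {ι κ : Type*} [DecidableEq ι] [DecidableEq κ] (L D : ι → κ → A) : Prop where
  mul_L_L : ∀ a b γ α, L a γ * L b α = commSign R γ α • (L b α * L a γ)
  mul_D_L : ∀ a b γ α,
    D a γ * L b α = commSign R γ α • (L b α * D a γ) + if a = b ∧ γ = α then 1 else 0
  mul_D_D : ∀ a b γ α, D a γ * D b α = commSign R γ α • (D b α * D a γ)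

namespace IsCommutingCAR

variable {R A : Type*} [CommRing R] [Ring A] [Algebra R A] {ι κ : Type*} [DecidableEq ι]
  [DecidableEq κ] {L D : ι → κ → A} (h : IsCommutingCAR R L D)
include h

theorem brk_D_D (i j : ι) (α β : κ) :
    brk (D i α) (D j β) = (1 - commSign R α β) • (D i α * D j β) := by
  refine (brk_eq_of_mul_eq_smul_add (d := 0) ?_).trans (sub_zero _)
  rw [add_zero, h.mul_D_D, commSign_comm]

theorem brk_L_D (i j : ι) (α β : κ) :
    brk (L i α) (D j β)
      = (1 - commSign R α β) • (L i α * D j β) - if j = i ∧ β = α then 1 else 0 := by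
  rw [brk_eq_of_mul_eq_smul_add (h.mul_D_L j i β α), commSign_comm]

theorem brk_D_mul_D_D (k i j : ι) (γ α : κ) : brk (D k γ) (D i α * D j α) = 0 :=
  (brk_mul_of_mul_eq_smul_add (commSign_mul_self (R := R) γ α)
    ((h.mul_D_D k i γ α).trans (add_zero _).symm) (h.mul_D_D k j γ α)).trans (zero_mul _)

theorem brk_D_mul_L_D (k i j : ι) (γ α : κ) :
    brk (D k γ) (L i α * D j α) = if k = i ∧ γ = α then D j α else 0 := by
  rw [brk_mul_of_mul_eq_smul_add (commSign_mul_self (R := R) γ α) (h.mul_D_L k i γ α)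
    (h.mul_D_D k j γ α), ite_mul, one_mul, zero_mul]

theorem brk_L_mul_L_D (k i j : ι) (γ α : κ) :
    brk (L k γ) (L i α * D j α) = if j = k ∧ α = γ then -L i α else 0 := by
  rw [brk_mul_of_mul_eq_smul_of_mul_eq_smul_add (h.mul_L_L k i γ α)
    (by rw [h.mul_D_L j k α γ, commSign_comm])]
  split_ifs <;> simp

variable [Fintype κ]

theorem brk_sum_D_sum_D (i j : ι) :
    brk (∑ α, D i α) (∑ β, D j β) = (2 : R) • ∑ α, D i α * D j α := by
  simp only [brk_sum_left, brk_sum_right, h.brk_D_D, one_sub_commSign, ite_smul, zero_smul,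
    sum_ite_eq', mem_univ, if_true, smul_sum]

theorem brk_sum_L_sum_D (i j : ι) :
    brk (∑ α, L i α) (∑ β, D j β)
      = (2 : R) • ∑ α, L i α * D j α - ((if j = i then Fintype.card κ else 0 : ℕ) : A) := by
  simp only [brk_sum_left, brk_sum_right, h.brk_L_D, one_sub_commSign, ite_smul, zero_smul,
    sum_sub_distrib, sum_ite_eq', mem_univ, if_true, smul_sum]
  congr 1
  split_ifs with hji <;> simp [hji]

theorem brk_sum_D_brk_sum_D_sum_D (k i j : ι) :
    brk (∑ γ, D k γ) (brk (∑ α, D i α) (∑ β, D j β)) = 0 := by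
  simp only [h.brk_sum_D_sum_D, brk_smul_right, brk_sum_right, brk_sum_left, h.brk_D_mul_D_D,
    sum_const_zero, smul_zero]

theorem brk_sum_D_brk_sum_L_sum_D (k i j : ι) :
    brk (∑ γ, D k γ) (brk (∑ α, L i α) (∑ β, D j β))
      = (if k = i then 2 else 0 : R) • ∑ β, D j β := by
  rw [h.brk_sum_L_sum_D, brk_sub_right, brk_natCast_right, sub_zero, brk_smul_right]
  simp only [brk_sum_right, brk_sum_left, h.brk_D_mul_L_D, ite_and]
  split_ifs with hki <;> simp [smul_sum]

theorem brk_sum_L_brk_sum_L_sum_D (k i j : ι) :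
    brk (∑ γ, L k γ) (brk (∑ α, L i α) (∑ β, D j β))
      = (if k = j then -2 else 0 : R) • ∑ α, L i α := by
  rw [h.brk_sum_L_sum_D, brk_sub_right, brk_natCast_right, sub_zero, brk_smul_right]
  simp only [brk_sum_right, brk_sum_left, h.brk_L_mul_L_D, ite_and]
  obtain rfl | hkj := eq_or_ne k j
  · simp [smul_sum]
  · simp [hkj, hkj.symm]

end IsCommutingCAR

section Lam

variable {n p : ℕ}

theorem θc_mul_θc_s8 (a b : Fin n) (γ α : Fin p) :
    θc n p a γ * θc n p b α = commSign ℂ γ α • (θc n p b α * θc n p a γ) := by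
  have h := RingQuot.mkAlgHom_rel ℂ (LamRel.comm a b γ α)
  rwa [map_mul, map_smul, map_mul] at h

theorem mulLeft_θv (i : Fin n) :
    LinearMap.mulLeft ℂ (θv n p i) = ∑ α, LinearMap.mulLeft ℂ (θc n p i α) :=
  map_sum (Algebra.lmul ℂ (Lam n p)) _ _

theorem isCommutingCAR_mulLeft_θc {Dp : Fin n → Fin p → Module.End ℂ (Lam n p)}
    (hD2 : ∀ (i j : Fin n) (α β : Fin p),
      Dp i α * LinearMap.mulLeft ℂ (θc n p j β)
          - commSign ℂ α β • (LinearMap.mulLeft ℂ (θc n p j β) * Dp i α)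
        = if i = j ∧ α = β then 1 else 0)
    (hD3 : ∀ (i j : Fin n) (α β : Fin p), Dp i α * Dp j β = commSign ℂ α β • (Dp j β * Dp i α)) :
    IsCommutingCAR ℂ (fun i α ↦ LinearMap.mulLeft ℂ (θc n p i α)) Dp where
  mul_L_L a b γ α := by
    have h := congrArg (Algebra.lmul ℂ (Lam n p)) (θc_mul_θc_s8 a b γ α)
    rwa [map_mul, map_smul, map_mul] at h
  mul_D_L a b γ α := eq_add_of_sub_eq' (G := Module.End ℂ (Lam n p)) (hD2 a b γ α)
  mul_D_D := hD3

end Lam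

theorem stmt_8_general (n p : ℕ)
    (Dp : Fin n → Fin p → Module.End ℂ (Lam n p))
    (hD2 : ∀ (i j : Fin n) (α β : Fin p),
      Dp i α * LinearMap.mulLeft ℂ (θc n p j β)
          - (if α = β then (-1 : ℂ) else 1) • (LinearMap.mulLeft ℂ (θc n p j β) * Dp i α)
        = if i = j ∧ α = β then 1 else 0)
    (hD3 : ∀ (i j : Fin n) (α β : Fin p),
      Dp i α * Dp j β = (if α = β then (-1 : ℂ) else 1) • (Dp j β * Dp i α))
    (i j k : Fin n) :
    brk (Δop n p Dp k) (brk (Δop n p Dp i) (Δop n p Dp j)) = 0 ∧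
    brk (Δop n p Dp k) (brk (LinearMap.mulLeft ℂ (θv n p i)) (Δop n p Dp j))
      = (if k = i then (2 : ℂ) else 0) • Δop n p Dp j ∧
    brk (LinearMap.mulLeft ℂ (θv n p k))
        (brk (LinearMap.mulLeft ℂ (θv n p i)) (Δop n p Dp j))
      = (if k = j then (-2 : ℂ) else 0) • LinearMap.mulLeft ℂ (θv n p i) := by
  have h := isCommutingCAR_mulLeft_θc hD2 hD3
  simp only [Δop, mulLeft_θv]
  exact ⟨h.brk_sum_D_brk_sum_D_sum_D k i j, h.brk_sum_D_brk_sum_L_sum_D k i j,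
    h.brk_sum_L_brk_sum_L_sum_D k i j⟩

/-- Operator identities in `End(Λ_n(p))`: `[Δ_k, [Δ_i, Δ_j]] = 0`,
`[Δ_k, [L_{θ_i}, Δ_j]] = 2δ_{ki}·Δ_j` and `[L_{θ_k}, [L_{θ_i}, Δ_j]] = −2δ_{kj}·L_{θ_i}`. -/
theorem stmt_8 (n p : ℕ) (hn : 0 < n) (hp : 0 < p)
    (Dp : Fin n → Fin p → Module.End ℂ (Lam n p))
    (hD1 : ∀ (i : Fin n) (α : Fin p), Dp i α (1 : Lam n p) = 0)
    (hD2 : ∀ (i j : Fin n) (α β : Fin p),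
      Dp i α * LinearMap.mulLeft ℂ (θc n p j β)
          - (if α = β then (-1 : ℂ) else 1) • (LinearMap.mulLeft ℂ (θc n p j β) * Dp i α)
        = if i = j ∧ α = β then 1 else 0)
    (hD3 : ∀ (i j : Fin n) (α β : Fin p),
      Dp i α * Dp j β = (if α = β then (-1 : ℂ) else 1) • (Dp j β * Dp i α))
    (i j k : Fin n) :
    brk (Δop n p Dp k) (brk (Δop n p Dp i) (Δop n p Dp j)) = 0 ∧
    brk (Δop n p Dp k) (brk (LinearMap.mulLeft ℂ (θv n p i)) (Δop n p Dp j))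
      = (if k = i then (2 : ℂ) else 0) • Δop n p Dp j ∧
    brk (LinearMap.mulLeft ℂ (θv n p k))
        (brk (LinearMap.mulLeft ℂ (θv n p i)) (Δop n p Dp j))
      = (if k = j then (-2 : ℂ) else 0) • LinearMap.mulLeft ℂ (θv n p i) :=
  stmt_8_general n p Dp hD2 hD3 i j k
end
end

section
/- For any scalars c_1, …, c_n ∈ K, setting Δ = Σ_{i=1}^n c_i·Δ_i ∈ End_K(Λ_n(p)), one has Δ^p ∘ Δ_j = −Δ_j ∘ Δ^p for all j = 1, …, n. -/
noncomputable section

open scoped BigOperators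


lemma nilp_sum {A : Type*} [Ring A] {ι : Type*} [DecidableEq ι] (f : ι → A)
    (hc : ∀ a b, Commute (f a) (f b)) (hsq : ∀ a, f a * f a = 0)
    (s : Finset ι) : (∑ a ∈ s, f a) ^ (s.card + 1) = 0 := by
  induction s using Finset.induction_on with
  | empty => simp
  | @insert a t ha ih =>
    have hcT : Commute (f a) (∑ b ∈ t, f b) :=
      Commute.sum_right _ _ _ fun b _ => hc a b
    rw [Finset.sum_insert ha, Finset.card_insert_of_notMem ha, hcT.add_pow]
    apply Finset.sum_eq_zero
    intro m _
    match m with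
    | 0 =>
      have : (∑ b ∈ t, f b) ^ (t.card + 1 + 1) = 0 := by
        rw [pow_succ, ih, zero_mul]
      simp [this]
    | 1 => simp [ih]
    | (m + 2) =>
      have : f a ^ (m + 2) = 0 := by
        rw [pow_add, pow_two, hsq, mul_zero]
      simp [this]

lemma main_aux (n p : ℕ) (hp : 0 < p)
    {A : Type*} [Ring A] [Algebra ℂ A]
    (Dp : Fin n → Fin p → A)
    (hD3 : ∀ (i j : Fin n) (α β : Fin p),
      Dp i α * Dp j β = (if α = β then (-1 : ℂ) else 1) • (Dp j β * Dp i α))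
    (c : Fin n → ℂ) (j : Fin n) :
    (∑ i, c i • (∑ α : Fin p, Dp i α)) ^ p * (∑ β : Fin p, Dp j β)
      = -((∑ β : Fin p, Dp j β) * (∑ i, c i • (∑ α : Fin p, Dp i α)) ^ p) := by
  classical
  set D : Fin p → A := fun α => ∑ i, c i • Dp i α with hDdef
  have hΔ : (∑ i, c i • (∑ α : Fin p, Dp i α)) = ∑ α, D α := by
    simp only [hDdef, Finset.smul_sum]
    rw [Finset.sum_comm]
  rw [hΔ]
  have hexp : ∀ a b : Fin p,
      D a * D b = ∑ i, ∑ i', (c i * c i') • (Dp i a * Dp i' b) := by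
    intro a b
    rw [Finset.sum_mul_sum]
    refine Finset.sum_congr rfl fun i _ => Finset.sum_congr rfl fun i' _ => ?_
    rw [smul_mul_assoc, mul_smul_comm, smul_smul]
  -- pairwise commutation of the D α
  have hcomm : ∀ a b : Fin p, Commute (D a) (D b) := by
    intro a b
    by_cases hab : a = b
    · subst hab; exact Commute.refl _
    · show D a * D b = D b * D a
      rw [hexp, hexp]
      rw [Finset.sum_comm]
      refine Finset.sum_congr rfl fun i _ => Finset.sum_congr rfl fun i' _ => ?_
      rw [hD3 i' i a b, if_neg hab, one_smul, mul_comm (c i') (c i)]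
  -- squares vanish
  have hsq : ∀ a : Fin p, D a * D a = 0 := by
    intro a
    have key : D a * D a = -(D a * D a) := by
      conv_lhs => rw [hexp]
      have step1 : ∀ i i' : Fin n, (c i * c i') • (Dp i a * Dp i' a)
          = -((c i * c i') • (Dp i' a * Dp i a)) := by
        intro i i'
        rw [hD3 i i' a a, if_pos rfl, neg_one_smul, smul_neg]
      have step2 : (∑ i, ∑ i', (c i * c i') • (Dp i' a * Dp i a)) = D a * D a := by
        rw [Finset.sum_comm, hexp]
        refine Finset.sum_congr rfl fun i _ => Finset.sum_congr rfl fun i' _ => ?_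
        rw [mul_comm (c i') (c i)]
      calc (∑ i, ∑ i', (c i * c i') • (Dp i a * Dp i' a))
          = ∑ i, ∑ i', -((c i * c i') • (Dp i' a * Dp i a)) := by simp only [step1]
        _ = -(∑ i, ∑ i', (c i * c i') • (Dp i' a * Dp i a)) := by simp
        _ = -(D a * D a) := by rw [step2]
    have h2 : (2 : ℂ) • (D a * D a) = 0 := by
      rw [two_smul]; nth_rewrite 1 [key]; simp
    simpa using (smul_eq_zero.mp h2).resolve_left (by norm_num)
  -- anticommutation of D β with Dp j β
  have hanti : ∀ β : Fin p, D β * Dp j β = -(Dp j β * D β) := by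
    intro β
    simp only [hDdef, Finset.sum_mul, Finset.mul_sum, smul_mul_assoc, mul_smul_comm,
      ← Finset.sum_neg_distrib]
    refine Finset.sum_congr rfl fun i _ => ?_
    rw [hD3 i j β β, if_pos rfl, neg_one_smul]
    simp
  -- Dp j β commutes with D α for α ≠ β
  have hcom2 : ∀ (α β : Fin p), α ≠ β → Commute (Dp j β) (D α) := by
    intro α β hne
    show Dp j β * D α = D α * Dp j β
    simp only [hDdef, Finset.sum_mul, Finset.mul_sum, smul_mul_assoc, mul_smul_comm]
    refine Finset.sum_congr rfl fun i _ => ?_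
    rw [hD3 j i β α, if_neg (fun h => hne h.symm), one_smul]
  -- key pointwise claim
  have key : ∀ β : Fin p, (∑ α, D α) ^ p * Dp j β = -(Dp j β * (∑ α, D α) ^ p) := by
    intro β
    set T : A := ∑ α ∈ Finset.univ.erase β, D α with hT
    have hsplit : (∑ α, D α) = D β + T := (Finset.add_sum_erase _ _ (Finset.mem_univ β)).symm
    have hTc : Commute (D β) T :=
      Commute.sum_right _ _ _ fun b _ => hcomm β b
    have hTp : T ^ p = 0 := by
      have h := nilp_sum D hcomm hsq (Finset.univ.erase β)
      rwa [Finset.card_erase_of_mem (Finset.mem_univ β), Finset.card_univ,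
        Fintype.card_fin, Nat.sub_add_cancel hp] at h
    have hpow : (∑ α, D α) ^ p = D β * T ^ (p - 1) * (p : A) := by
      rw [hsplit, hTc.add_pow]
      rw [Finset.sum_eq_single_of_mem 1 (Finset.mem_range.mpr (by omega))]
      · simp
      · intro m hm hne
        match m with
        | 0 => simp [hTp]
        | 1 => exact absurd rfl hne
        | (m + 2) =>
          have : D β ^ (m + 2) = 0 := by rw [pow_add, pow_two, hsq, mul_zero]
          simp [this]
    have hTj : Commute (Dp j β) (T ^ (p - 1)) := by
      refine Commute.pow_right ?_ _
      exact Commute.sum_right _ _ _ fun b hb => hcom2 b β (Finset.ne_of_mem_erase hb)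
    have hnat : Commute (Dp j β) ((p : A)) := (Nat.cast_commute p _).symm
    have hX : Commute (Dp j β) (T ^ (p - 1) * (p : A)) := hTj.mul_right hnat
    rw [hpow, mul_assoc, mul_assoc, (Nat.cast_commute p (Dp j β)).eq,
      ← mul_assoc (T ^ (p - 1)), ← hTj.eq, mul_assoc, ← mul_assoc, ← mul_assoc,
      hanti β]
    simp [mul_assoc]
  rw [Finset.mul_sum, Finset.sum_mul]
  simp only [key, ← Finset.sum_neg_distrib]

/-- For `Δ = Σ c_i·Δ_i`, one has `Δ^p ∘ Δ_j = −Δ_j ∘ Δ^p` for all `j`. -/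
theorem stmt_9 (n p : ℕ) (hn : 0 < n) (hp : 0 < p)
    (Dp : Fin n → Fin p → Module.End ℂ (Lam n p))
    (hD1 : ∀ (i : Fin n) (α : Fin p), Dp i α (1 : Lam n p) = 0)
    (hD2 : ∀ (i j : Fin n) (α β : Fin p),
      Dp i α * LinearMap.mulLeft ℂ (θc n p j β)
          - (if α = β then (-1 : ℂ) else 1) • (LinearMap.mulLeft ℂ (θc n p j β) * Dp i α)
        = if i = j ∧ α = β then 1 else 0)
    (hD3 : ∀ (i j : Fin n) (α β : Fin p),
      Dp i α * Dp j β = (if α = β then (-1 : ℂ) else 1) • (Dp j β * Dp i α))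
    (c : Fin n → ℂ) (j : Fin n) :
    (∑ i, c i • Δop n p Dp i) ^ p * Δop n p Dp j
      = -(Δop n p Dp j * (∑ i, c i • Δop n p Dp i) ^ p) := by
  simp only [Δop]
  exact main_aux n p hp Dp hD3 c j
end
end

section
/- For any ℓ ≥ 0 and any indices i_1, …, i_ℓ ∈ {1,…,n}, if there exists some j ∈ {1,…,n} whose number of occurrences among i_1, …, i_ℓ is not equal to p, then Δ_n^p ∘ Δ_{n−1}^p ∘ ⋯ ∘ Δ_1^p (θ_{i_1}·θ_{i_2}⋯θ_{i_ℓ}) = 0 in Λ_n(p); that is, the integral (1/(p!)^n)·Δ_n^p ∘ ⋯ ∘ Δ_1^p of the monomial θ_{i_1}⋯θ_{i_ℓ} is nonzero only if every index j ∈ {1,…,n} occurs exactly p times among i_1, …, i_ℓ. -/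
noncomputable section

open scoped BigOperators

/-!
Fix `j`. Words in the generators `θ_i^{(α)}` with exactly `c` letters of index `j` span a
subspace `S_j(c)`. The Leibniz rule shows that `∂_i^{(α)}` maps `S_j(c)` into `S_j(c - δ_ij)`,
so `Δ_n^p ∘ ⋯ ∘ Δ_1^p` maps `S_j(c)` into `S_j(c - p)`. A monomial `θ_{i_1} ⋯ θ_{i_ℓ}` in which
`j` occurs `c` times lies in `S_j(c)`. Finally `S_j(c) = 0` both for `c < 0` and for `c > p`:
in the latter case some `θ_j^{(α)}` occurs twice in every spanning word, and it squares to zero.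
-/

namespace Lam

variable {n p : ℕ}

def gen (n p : ℕ) (g : Fin n × Fin p) : Lam n p := θc n p g.1 g.2

lemma gen_mul_gen (g h : Fin n × Fin p) :
    gen n p g * gen n p h = (if g.2 = h.2 then (-1 : ℂ) else 1) • (gen n p h * gen n p g) := by
  have h := RingQuot.mkAlgHom_rel ℂ (LamRel.comm (n := n) (p := p) g.1 h.1 g.2 h.2)
  rwa [map_mul, map_smul, map_mul] at h

lemma gen_mul_self (g : Fin n × Fin p) : gen n p g * gen n p g = 0 := by
  have h := gen_mul_gen g g
  rw [if_pos rfl] at h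
  linear_combination (norm := module) ((2 : ℂ)⁻¹) • h

def wprod (n p : ℕ) (M : List (Fin n × Fin p)) : Lam n p := (M.map (gen n p)).prod

@[simp] lemma wprod_nil : wprod n p [] = 1 := rfl

@[simp] lemma wprod_cons (g : Fin n × Fin p) (M : List (Fin n × Fin p)) :
    wprod n p (g :: M) = gen n p g * wprod n p M := List.prod_cons

lemma gen_mul_wprod_of_mem {g : Fin n × Fin p} {M : List (Fin n × Fin p)} (hg : g ∈ M) :
    gen n p g * wprod n p M = 0 := by
  induction M with
  | nil => simp at hg
  | cons h t ih =>
    rcases List.mem_cons.mp hg with rfl | hmem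
    · rw [wprod_cons, ← mul_assoc, gen_mul_self, zero_mul]
    · rw [wprod_cons, ← mul_assoc, gen_mul_gen, smul_mul_assoc, mul_assoc, ih hmem, mul_zero,
        smul_zero]

lemma wprod_eq_zero_of_not_nodup {M : List (Fin n × Fin p)} (hM : ¬ M.Nodup) :
    wprod n p M = 0 := by
  induction M with
  | nil => simp at hM
  | cons g t ih =>
    rw [List.nodup_cons, not_and_or, not_not] at hM
    rw [wprod_cons]
    rcases hM with hg | ht
    · exact gen_mul_wprod_of_mem hg
    · rw [ih ht, mul_zero]

def jDeg (j : Fin n) (M : List (Fin n × Fin p)) : ℕ := M.countP (·.1 = j)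

lemma jDeg_cons (j : Fin n) (g : Fin n × Fin p) (M : List (Fin n × Fin p)) :
    jDeg j (g :: M) = jDeg j M + if g.1 = j then 1 else 0 := by
  simp [jDeg, List.countP_cons]

lemma jDeg_le_of_nodup (j : Fin n) {M : List (Fin n × Fin p)} (hM : M.Nodup) :
    jDeg j M ≤ p := by
  have hinj : ∀ g ∈ M.filter (·.1 = j), ∀ h ∈ M.filter (·.1 = j), g.2 = h.2 → g = h := by
    intro g hg h hh h2
    simp only [List.mem_filter, decide_eq_true_eq] at hg hh
    exact Prod.ext (hg.2.trans hh.2.symm) h2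
  simpa [jDeg, List.countP_eq_length_filter] using
    ((hM.filter _).map_on hinj).length_le_card

/-- Indexed by `ℤ` so that the negative degrees produced by the derivations give `⊥`. -/
def degSpan (j : Fin n) (c : ℤ) : Submodule ℂ (Lam n p) :=
  Submodule.span ℂ (wprod n p '' {M | (jDeg j M : ℤ) = c})

lemma wprod_mem_degSpan (j : Fin n) (M : List (Fin n × Fin p)) :
    wprod n p M ∈ degSpan j (jDeg j M) :=
  Submodule.subset_span ⟨M, rfl, rfl⟩

lemma map_mem_degSpan {j : Fin n} {c c' : ℤ} (f : Module.End ℂ (Lam n p))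
    (hf : ∀ M, (jDeg j M : ℤ) = c → f (wprod n p M) ∈ degSpan j c') {x : Lam n p}
    (hx : x ∈ degSpan j c) : f x ∈ degSpan j c' :=
  (Submodule.span_le (p := (degSpan j c').comap f)).mpr
    (by rintro _ ⟨M, hM, rfl⟩; exact hf M hM) hx

lemma degSpan_eq_bot_of_neg (j : Fin n) {c : ℤ} (hc : c < 0) :
    degSpan (p := p) j c = ⊥ := by
  rw [degSpan, Submodule.span_eq_bot]
  rintro _ ⟨M, hM, rfl⟩
  simp only [Set.mem_ofPred_eq] at hM
  omega

lemma degSpan_eq_bot_of_gt (j : Fin n) {c : ℤ} (hc : (p : ℤ) < c) :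
    degSpan (p := p) j c = ⊥ := by
  rw [degSpan, Submodule.span_eq_bot]
  rintro _ ⟨M, hM, rfl⟩
  refine wprod_eq_zero_of_not_nodup fun hnd => ?_
  have := jDeg_le_of_nodup j hnd
  simp only [Set.mem_ofPred_eq] at hM
  omega

lemma gen_mul_mem_degSpan (j : Fin n) (g : Fin n × Fin p) {c : ℤ} {x : Lam n p}
    (hx : x ∈ degSpan j c) :
    gen n p g * x ∈ degSpan j (c + if g.1 = j then 1 else 0) :=
  map_mem_degSpan (LinearMap.mulLeft ℂ (gen n p g))
    (by rintro M rfl; simpa [jDeg_cons] using wprod_mem_degSpan j (g :: M)) hx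

lemma θv_mul_mem_degSpan (j i : Fin n) {c : ℤ} {x : Lam n p} (hx : x ∈ degSpan j c) :
    θv n p i * x ∈ degSpan j (c + if i = j then 1 else 0) := by
  rw [θv, Finset.sum_mul]
  exact Submodule.sum_mem _ fun α _ => gen_mul_mem_degSpan j (i, α) hx

lemma prod_ofFn_θv_mem_degSpan (j : Fin n) {ℓ : ℕ} (js : Fin ℓ → Fin n) :
    (List.ofFn fun k => θv n p (js k)).prod
      ∈ degSpan j (Finset.univ.filter fun k => js k = j).card := by
  induction ℓ with
  | zero => simpa [jDeg] using wprod_mem_degSpan (p := p) j []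
  | succ ℓ ih =>
    rw [List.ofFn_succ, List.prod_cons, Finset.card_filter, Fin.sum_univ_succ,
      ← Finset.card_filter, add_comm]
    simpa using θv_mul_mem_degSpan j (js 0) (ih fun k => js k.succ)

def LowersDegree (j : Fin n) (d : ℤ) (E : Module.End ℂ (Lam n p)) : Prop :=
  ∀ ⦃c : ℤ⦄ ⦃x : Lam n p⦄, x ∈ degSpan j c → E x ∈ degSpan j (c - d)

lemma lowersDegree_of_wprod {j : Fin n} {d : ℤ} {E : Module.End ℂ (Lam n p)}
    (hE : ∀ M, E (wprod n p M) ∈ degSpan j (jDeg j M - d)) : LowersDegree j d E :=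
  fun _ _ hx => map_mem_degSpan E (by rintro M rfl; exact hE M) hx

lemma LowersDegree.one (j : Fin n) : LowersDegree j 0 (1 : Module.End ℂ (Lam n p)) :=
  fun _ _ hx => by simpa using hx

lemma LowersDegree.mul {j : Fin n} {d d' : ℤ} {E E' : Module.End ℂ (Lam n p)}
    (hE : LowersDegree j d E) (hE' : LowersDegree j d' E') : LowersDegree j (d' + d) (E * E') :=
  fun _ _ hx => by simpa [sub_add_eq_sub_sub] using hE (hE' hx)

lemma LowersDegree.pow {j : Fin n} {d : ℤ} {E : Module.End ℂ (Lam n p)}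
    (hE : LowersDegree j d E) (m : ℕ) : LowersDegree j (m * d) (E ^ m) := by
  induction m with
  | zero => simpa using LowersDegree.one j
  | succ m ih => simpa [pow_succ, add_mul, add_comm] using ih.mul hE

lemma LowersDegree.sum {j : Fin n} {d : ℤ} {ι : Type*} {s : Finset ι}
    {E : ι → Module.End ℂ (Lam n p)} (hE : ∀ a ∈ s, LowersDegree j d (E a)) :
    LowersDegree j d (∑ a ∈ s, E a) :=
  fun _ _ hx => by simpa using Submodule.sum_mem _ fun a ha => hE a ha hx

lemma LowersDegree.prod_ofFn {j : Fin n} {m : ℕ} {d : Fin m → ℤ}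
    {E : Fin m → Module.End ℂ (Lam n p)} (hE : ∀ t, LowersDegree j (d t) (E t)) :
    LowersDegree j (∑ t, d t) (List.ofFn E).prod := by
  induction m with
  | zero => simpa using LowersDegree.one j
  | succ m ih =>
    rw [List.ofFn_succ, List.prod_cons, Fin.sum_univ_succ, add_comm]
    exact (hE 0).mul (ih fun t => hE t.succ)

lemma lowersDegree_of_leibniz (j : Fin n) (g₀ : Fin n × Fin p) (ε : Fin n × Fin p → ℂ)
    {D : Module.End ℂ (Lam n p)} (hD1 : D 1 = 0)
    (hD : ∀ g x, D (gen n p g * x) = ε g • (gen n p g * D x) + if g = g₀ then x else 0) :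
    LowersDegree j (if g₀.1 = j then 1 else 0) D := by
  refine lowersDegree_of_wprod fun M => ?_
  induction M with
  | nil => simp [hD1]
  | cons g M ih =>
    rw [wprod_cons, hD, jDeg_cons]
    refine Submodule.add_mem _ (Submodule.smul_mem _ _ ?_) ?_
    · convert gen_mul_mem_degSpan j g ih using 2
      push_cast
      ring
    · rcases eq_or_ne g g₀ with rfl | hg
      · simpa using wprod_mem_degSpan j M
      · simp [hg]

lemma apply_gen_mul (Dp : Fin n → Fin p → Module.End ℂ (Lam n p))
    (hD2 : ∀ (i j : Fin n) (α β : Fin p),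
      Dp i α * LinearMap.mulLeft ℂ (θc n p j β)
          - (if α = β then (-1 : ℂ) else 1) • (LinearMap.mulLeft ℂ (θc n p j β) * Dp i α)
        = if i = j ∧ α = β then 1 else 0)
    (i : Fin n) (α : Fin p) (g : Fin n × Fin p) (x : Lam n p) :
    Dp i α (gen n p g * x)
      = (if α = g.2 then (-1 : ℂ) else 1) • (gen n p g * Dp i α x)
        + if g = (i, α) then x else 0 := by
  have h := LinearMap.congr_fun (hD2 i g.1 α g.2) x
  have hδ : (i = g.1 ∧ α = g.2) ↔ g = (i, α) := by simp [Prod.ext_iff, eq_comm]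
  simp only [LinearMap.sub_apply, Module.End.mul_apply, LinearMap.smul_apply,
    LinearMap.mulLeft_apply, hδ] at h
  rw [← gen, sub_eq_iff_eq_add, add_comm] at h
  rw [h]
  split_ifs <;> rfl

end Lam

open Lam in
theorem stmt_16_general (n p : ℕ)
    (Dp : Fin n → Fin p → Module.End ℂ (Lam n p))
    (hD1 : ∀ (i : Fin n) (α : Fin p), Dp i α (1 : Lam n p) = 0)
    (hD2 : ∀ (i j : Fin n) (α β : Fin p),
      Dp i α * LinearMap.mulLeft ℂ (θc n p j β)
          - (if α = β then (-1 : ℂ) else 1) • (LinearMap.mulLeft ℂ (θc n p j β) * Dp i α)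
        = if i = j ∧ α = β then 1 else 0)
    (ℓ : ℕ) (js : Fin ℓ → Fin n)
    (h : ∃ j : Fin n, (Finset.univ.filter fun k => js k = j).card ≠ p) :
    (List.ofFn fun t : Fin n => Δop n p Dp t.rev ^ p).prod
        ((List.ofFn fun k => θv n p (js k)).prod) = 0 := by
  obtain ⟨j, hj⟩ := h
  have hΔ (i : Fin n) : LowersDegree j (if i = j then 1 else 0) (Δop n p Dp i) :=
    LowersDegree.sum fun α _ =>
      lowersDegree_of_leibniz j (i, α) _ (hD1 i α) (apply_gen_mul Dp hD2 i α)
  have hdeg : ∑ t : Fin n, (p : ℤ) * (if t.rev = j then 1 else 0) = p := by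
    simp [Fin.rev_eq_iff]
  have hF := LowersDegree.prod_ofFn fun t : Fin n => (hΔ t.rev).pow p
  rw [hdeg] at hF
  have hmono := prod_ofFn_θv_mem_degSpan (p := p) j js
  rcases lt_or_gt_of_ne hj with hlt | hgt
  · have hres := hF hmono
    rwa [degSpan_eq_bot_of_neg j (by omega), Submodule.mem_bot] at hres
  · rw [degSpan_eq_bot_of_gt j (by exact_mod_cast hgt), Submodule.mem_bot] at hmono
    rw [hmono, map_zero]

/-- If some index `j` does not occur exactly `p` times among
`i_1, …, i_ℓ`, then `Δ_n^p ∘ ⋯ ∘ Δ_1^p (θ_{i_1}⋯θ_{i_ℓ}) = 0` in `Λ_n(p)`. -/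
theorem stmt_16 (n p : ℕ) (hn : 0 < n) (hp : 0 < p)
    (Dp : Fin n → Fin p → Module.End ℂ (Lam n p))
    (hD1 : ∀ (i : Fin n) (α : Fin p), Dp i α (1 : Lam n p) = 0)
    (hD2 : ∀ (i j : Fin n) (α β : Fin p),
      Dp i α * LinearMap.mulLeft ℂ (θc n p j β)
          - (if α = β then (-1 : ℂ) else 1) • (LinearMap.mulLeft ℂ (θc n p j β) * Dp i α)
        = if i = j ∧ α = β then 1 else 0)
    (hD3 : ∀ (i j : Fin n) (α β : Fin p),
      Dp i α * Dp j β = (if α = β then (-1 : ℂ) else 1) • (Dp j β * Dp i α))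
    (ℓ : ℕ) (js : Fin ℓ → Fin n)
    (h : ∃ j : Fin n, (Finset.univ.filter fun k => js k = j).card ≠ p) :
    (List.ofFn fun t : Fin n => Δop n p Dp t.rev ^ p).prod
        ((List.ofFn fun k => θv n p (js k)).prod) = 0 :=
  stmt_16_general n p Dp hD1 hD2 ℓ js h
end
end
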